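/- Let χ be a rank-one projection (pure state) on a d-dimensional Hilbert space with d ≥ 2, let 0 < ε < 1, and define the mixed state τ = (1 − ε/2) χ + (ε/(2(d−1))) (I − χ). Then the purity of coherence of τ is bounded by P_H(τ) ≤ (2(d−1)/ε) · V_H(χ), where V_H(χ) = Tr(χ H²) − (Tr(χ H))² is the energy variance of the pure state χ. -/
import Mathlib

open Matrix BigOperators

/-- Matrix element ⟨v|A|w⟩. -/
noncomputable def matElem {n : Type*} [Fintype n] (v : n → ℂ)
    (A : Matrix n n ℂ) (w : n → ℂ) : ℂ :=
  star v ⬝ᵥ A.mulVec w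

/-- Energy variance ⟨ψ|H²|ψ⟩ − ⟨ψ|H|ψ⟩² of a (unit) vector ψ. -/
noncomputable def variance {n : Type*} [Fintype n] (H : Matrix n n ℂ) (v : n → ℂ) : ℝ :=
  (matElem v (H * H) v).re - ((matElem v H v).re) ^ 2

/-- Quantum Fisher information computed from a spectral decomposition
`ρ = ∑ j, p j • |ψ j⟩⟨ψ j|`; terms with `p j + p k = 0` are omitted. -/
noncomputable def QFI {ι : Type*} [Fintype ι] {n : Type*} [Fintype n]
    (p : ι → ℝ) (ψ : ι → n → ℂ) (H : Matrix n n ℂ) : ℝ :=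
  2 * ∑ j, ∑ k, if p j + p k = 0 then 0 else
    (p j - p k) ^ 2 / (p j + p k) * Complex.normSq (matElem (ψ j) H (ψ k))

/-- Rank-one operator |v⟩⟨w| as a matrix. -/
noncomputable def ketbra {n : Type*} (v w : n → ℂ) : Matrix n n ℂ :=
  fun i j => v i * star (w j)

/-- Outer product |v⟩⟨v| as a matrix. -/
noncomputable def outer {n : Type*} (v : n → ℂ) : Matrix n n ℂ :=
  fun i j => v i * star (v j)

/-- Purity of coherence P_H(ρ) = Tr(H ρ² H ρ⁻¹) − Tr(ρ H²) (for invertible ρ). -/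
noncomputable def PoC {n : Type*} [Fintype n] [DecidableEq n]
    (H ρ : Matrix n n ℂ) : ℝ :=
  ((H * ρ ^ 2 * H * ρ⁻¹).trace - (ρ * H ^ 2).trace).re

section Aux

variable {n : Type*} [Fintype n]

lemma outer_mulVec' (χ v : n → ℂ) : (outer χ).mulVec v = (star χ ⬝ᵥ v) • χ := by
  funext i
  simp only [outer, mulVec, dotProduct, Pi.smul_apply, Pi.star_apply, smul_eq_mul,
    Finset.sum_mul, Finset.mul_sum]
  refine Finset.sum_congr rfl fun j _ => by ring

lemma trace_mul_outer' (M : Matrix n n ℂ) (χ : n → ℂ) :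
    (M * outer χ).trace = matElem χ M χ := by
  simp only [trace, Matrix.mul_apply, outer, matElem, dotProduct, mulVec, diag,
    Pi.star_apply, Finset.mul_sum]
  refine Finset.sum_congr rfl fun i _ => Finset.sum_congr rfl fun j _ => by ring

lemma outer_mul_outer' {χ : n → ℂ} (hχ : star χ ⬝ᵥ χ = 1) :
    outer χ * outer χ = outer χ := by
  funext i j
  simp only [Matrix.mul_apply, outer]
  have : ∑ k, χ i * star (χ k) * (χ k * star (χ j))
      = (star χ ⬝ᵥ χ) * (χ i * star (χ j)) := by
    simp only [dotProduct, Pi.star_apply, Finset.sum_mul]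
    refine Finset.sum_congr rfl fun k _ => by ring
  rw [this, hχ, one_mul]

lemma herm_swap {H : Matrix n n ℂ} (hH : H.IsHermitian) (χ w : n → ℂ) :
    star χ ⬝ᵥ H.mulVec w = star (H.mulVec χ) ⬝ᵥ w := by
  rw [star_mulVec, hH.eq, dotProduct_mulVec]

lemma re_star_dot_nonneg (v : n → ℂ) : 0 ≤ (star v ⬝ᵥ v).re := by
  simp only [dotProduct, Pi.star_apply, Complex.re_sum]
  refine Finset.sum_nonneg fun i _ => ?_
  rw [show star (v i) = (starRingEnd ℂ) (v i) from rfl, ← Complex.normSq_eq_conj_mul_self]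
  simp [Complex.normSq_nonneg]

lemma star_dot_self_real (χ : n → ℂ) {H : Matrix n n ℂ} (hH : H.IsHermitian) :
    star (star χ ⬝ᵥ H.mulVec χ) = star χ ⬝ᵥ H.mulVec χ := by
  rw [← star_dotProduct_star, star_star, ← herm_swap hH]

variable [DecidableEq n]

lemma combo_mul (x y u v : ℂ) {P : Matrix n n ℂ} (hPP : P * P = P) :
    (x • P + y • 1) * (u • P + v • 1)
      = (x * u + x * v + y * u) • P + (y * v) • 1 := by
  simp only [Matrix.add_mul, Matrix.mul_add, Matrix.smul_mul, Matrix.mul_smul,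
    Matrix.mul_one, Matrix.one_mul, smul_smul, hPP]
  module

lemma coeff_bound {a b : ℝ} (ha : 0 < a) (hb : 0 < b) (hab : b ≤ a)
    (hsum : a + b ≤ 1) : (a + b) * (a - b) ^ 2 / (a * b) ≤ 1 / b := by
  have hab0 : (0:ℝ) < a * b := mul_pos ha hb
  rw [div_le_div_iff₀ hab0 hb]
  have hba : 0 ≤ a - b := by linarith
  have hd1 : a - b ≤ 1 := by nlinarith
  have key : (a + b) * (a - b) ^ 2 ≤ a := by nlinarith [sq_nonneg (a - b)]
  nlinarith [mul_le_mul_of_nonneg_right key hb.le]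

end Aux

/-- The mixture τ = (1 − ε/2)|χ⟩⟨χ| + (ε/(2(d−1)))(I − |χ⟩⟨χ|) of a pure
state with the totally mixed part has purity of coherence at most
(2(d−1)/ε)·V_H(χ). -/
theorem poc_noisy_pure_state_bound {d : ℕ} (hd : 2 ≤ d)
    (H : Matrix (Fin d) (Fin d) ℂ) (hH : H.IsHermitian)
    (χ : Fin d → ℂ) (hχ : star χ ⬝ᵥ χ = 1)
    {ε : ℝ} (hε0 : 0 < ε) (hε1 : ε < 1)
    (τ : Matrix (Fin d) (Fin d) ℂ)
    (hτ : τ = ((1 - ε / 2 : ℝ) : ℂ) • outer χ +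
      ((ε / (2 * ((d : ℝ) - 1)) : ℝ) : ℂ) • (1 - outer χ)) :
    PoC H τ ≤ 2 * ((d : ℝ) - 1) / ε * variance H χ := by
  set P : Matrix (Fin d) (Fin d) ℂ := outer χ with hP
  set a : ℝ := 1 - ε / 2 with ha_def
  set b : ℝ := ε / (2 * ((d : ℝ) - 1)) with hb_def
  have hd1 : (1:ℝ) ≤ (d : ℝ) - 1 := by
    have : (2:ℝ) ≤ (d:ℝ) := by exact_mod_cast hd
    linarith
  have ha : (0:ℝ) < a := by rw [ha_def]; linarith
  have ha1 : a ≤ 1 := by rw [ha_def]; linarith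
  have hb : (0:ℝ) < b := by
    rw [hb_def]; positivity
  have hbe : b ≤ ε / 2 := by
    rw [hb_def]
    apply div_le_div_of_nonneg_left (le_of_lt hε0) (by linarith) (by linarith)
  have hab : b ≤ a := by rw [ha_def]; linarith
  have ha' : (a:ℂ) ≠ 0 := by exact_mod_cast ha.ne'
  have hb' : (b:ℂ) ≠ 0 := by exact_mod_cast hb.ne'
  have hPP : P * P = P := outer_mul_outer' hχ
  set e : ℂ := matElem χ H χ with he_def
  set m : ℂ := matElem χ (H * H) χ with hm_def
  set T : ℂ := (H * H).trace with hT_def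
  have he : star e = e := star_dot_self_real χ hH
  have heim : e.im = 0 := by
    have := congrArg Complex.im he
    simp only [Complex.star_def, Complex.conj_im] at this
    linarith
  -- rewrite τ in P-and-1 form
  have hτ' : τ = ((a - b : ℝ) : ℂ) • P + ((b : ℝ) : ℂ) • 1 := by
    rw [hτ]; push_cast; module
  have hτsq : τ ^ 2 = ((a^2 - b^2 : ℝ) : ℂ) • P + ((b^2 : ℝ) : ℂ) • 1 := by
    rw [pow_two, hτ', combo_mul _ _ _ _ hPP]
    push_cast
    congr 1 <;> congr 1 <;> ring
  -- inverse of τ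
  set σ : Matrix (Fin d) (Fin d) ℂ :=
    ((a⁻¹ - b⁻¹ : ℝ) : ℂ) • P + ((b⁻¹ : ℝ) : ℂ) • 1 with hσ_def
  have hinv : τ⁻¹ = σ := by
    apply Matrix.inv_eq_right_inv
    rw [hτ', hσ_def, combo_mul _ _ _ _ hPP]
    have c1 : ((a - b : ℝ) : ℂ) * ((a⁻¹ - b⁻¹ : ℝ) : ℂ)
        + ((a - b : ℝ) : ℂ) * ((b⁻¹ : ℝ) : ℂ)
        + ((b : ℝ) : ℂ) * ((a⁻¹ - b⁻¹ : ℝ) : ℂ) = 0 := by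
      push_cast
      field_simp
      ring
    have c2 : ((b : ℝ) : ℂ) * ((b⁻¹ : ℝ) : ℂ) = 1 := by
      push_cast
      field_simp
    rw [c1, c2, zero_smul, one_smul, zero_add]
  -- trace building blocks
  have tA : (H * P * H * P).trace = e ^ 2 := by
    rw [trace_mul_outer']
    simp only [matElem, ← mulVec_mulVec, hP, outer_mulVec', mulVec_smul, dotProduct_smul]
    rw [he_def]
    simp only [matElem, smul_eq_mul]
    ring
  have tB : (H * P * H).trace = m := by
    rw [trace_mul_comm, ← Matrix.mul_assoc]
    exact trace_mul_outer' _ _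
  have tC : (H * H * P).trace = m := trace_mul_outer' _ _
  have tD : (P * (H * H)).trace = m := by rw [trace_mul_comm]; exact tC
  -- the two traces
  have hT1 : (H * τ ^ 2 * H * τ⁻¹).trace
      = ((a^2 - b^2 : ℝ) : ℂ) * ((a⁻¹ - b⁻¹ : ℝ) : ℂ) * e ^ 2
        + (((a^2 - b^2 : ℝ) : ℂ) * ((b⁻¹ : ℝ) : ℂ)
          + ((b^2 : ℝ) : ℂ) * ((a⁻¹ - b⁻¹ : ℝ) : ℂ)) * m
        + ((b^2 : ℝ) : ℂ) * ((b⁻¹ : ℝ) : ℂ) * T := by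
    rw [hτsq, hinv, hσ_def]
    have expand : H * (((a^2 - b^2 : ℝ) : ℂ) • P + ((b^2 : ℝ) : ℂ) • 1) * H *
        (((a⁻¹ - b⁻¹ : ℝ) : ℂ) • P + ((b⁻¹ : ℝ) : ℂ) • 1)
        = (((a^2 - b^2 : ℝ) : ℂ) * ((a⁻¹ - b⁻¹ : ℝ) : ℂ)) • (H * P * H * P)
          + (((a^2 - b^2 : ℝ) : ℂ) * ((b⁻¹ : ℝ) : ℂ)) • (H * P * H)
          + (((b^2 : ℝ) : ℂ) * ((a⁻¹ - b⁻¹ : ℝ) : ℂ)) • (H * H * P)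
          + (((b^2 : ℝ) : ℂ) * ((b⁻¹ : ℝ) : ℂ)) • (H * H) := by
      simp only [Matrix.mul_add, Matrix.add_mul, Matrix.smul_mul, Matrix.mul_smul,
        Matrix.mul_one, Matrix.one_mul, smul_smul]
      module
    rw [expand]
    simp only [trace_add, trace_smul, tA, tB, tC, smul_eq_mul]
    ring
  have hT2 : (τ * H ^ 2).trace = ((a - b : ℝ) : ℂ) * m + ((b : ℝ) : ℂ) * T := by
    rw [pow_two, hτ', Matrix.add_mul, Matrix.smul_mul, Matrix.smul_mul, Matrix.one_mul]
    simp only [trace_add, trace_smul, tD, smul_eq_mul, hT_def]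
  -- the coefficient
  set c : ℝ := (a + b) * (a - b) ^ 2 / (a * b) with hc_def
  have hr1 : (a^2 - b^2) * (a⁻¹ - b⁻¹) = -c := by
    rw [hc_def]; field_simp; ring
  have hr2 : (a^2 - b^2) * b⁻¹ + b^2 * (a⁻¹ - b⁻¹) - (a - b) = c := by
    rw [hc_def]; field_simp; ring
  have hr3 : b^2 * b⁻¹ - b = 0 := by field_simp; ring
  have hZ : (H * τ ^ 2 * H * τ⁻¹).trace - (τ * H ^ 2).trace
      = ((c : ℝ) : ℂ) * (m - e ^ 2) := by
    rw [hT1, hT2]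
    have hc1 : ((a^2 - b^2 : ℝ) : ℂ) * ((a⁻¹ - b⁻¹ : ℝ) : ℂ) = -((c : ℝ) : ℂ) := by
      rw [← Complex.ofReal_mul, hr1, Complex.ofReal_neg]
    have hc2 : ((a^2 - b^2 : ℝ) : ℂ) * ((b⁻¹ : ℝ) : ℂ)
        + ((b^2 : ℝ) : ℂ) * ((a⁻¹ - b⁻¹ : ℝ) : ℂ) - ((a - b : ℝ) : ℂ)
        = ((c : ℝ) : ℂ) := by
      push_cast
      exact_mod_cast congrArg (Complex.ofReal) hr2
    have hc3 : ((b^2 : ℝ) : ℂ) * ((b⁻¹ : ℝ) : ℂ) - ((b : ℝ) : ℂ) = 0 := by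
      rw [← Complex.ofReal_mul, ← Complex.ofReal_sub, hr3, Complex.ofReal_zero]
    linear_combination e ^ 2 * hc1 + m * hc2 + T * hc3
  -- variance is (m - e²).re and is nonnegative
  have hme : m - e ^ 2 = star (H.mulVec χ - e • χ) ⬝ᵥ (H.mulVec χ - e • χ) := by
    have h1 : star (H.mulVec χ) ⬝ᵥ H.mulVec χ = m := by
      rw [hm_def]; simp only [matElem, ← mulVec_mulVec]
      exact (herm_swap hH χ (H.mulVec χ)).symm
    have h2 : star (H.mulVec χ) ⬝ᵥ χ = e := by
      rw [he_def]; simp only [matElem]; exact (herm_swap hH χ χ).symm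
    have h3 : star χ ⬝ᵥ H.mulVec χ = e := rfl
    rw [star_sub, star_smul, he]
    simp only [sub_dotProduct, dotProduct_sub, smul_dotProduct, dotProduct_smul,
      smul_eq_mul]
    rw [h1, h2, h3, hχ]
    ring
  have hvar : variance H χ = (m - e ^ 2).re := by
    rw [variance, ← hm_def, ← he_def]
    have : (e ^ 2).re = e.re ^ 2 := by
      rw [pow_two, Complex.mul_re, heim]
      ring
    rw [Complex.sub_re, this]
  have hV0 : 0 ≤ variance H χ := by
    rw [hvar, hme]
    exact re_star_dot_nonneg _
  have hPoC : PoC H τ = c * variance H χ := by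
    rw [PoC, hZ, hvar]
    rw [Complex.mul_re]
    simp
  -- final bound
  have hcK : c ≤ 2 * ((d : ℝ) - 1) / ε := by
    have hKb : 2 * ((d : ℝ) - 1) / ε = 1 / b := by
      rw [hb_def, one_div_div]
    have hsum : a + b ≤ 1 := by rw [ha_def]; linarith
    rw [hKb, hc_def]
    exact coeff_bound ha hb hab hsum
  rw [hPoC]
  exact mul_le_mul_of_nonneg_right hcK hV0
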